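/- Guards placed at the vertices v0, v3, v6 of the nonagon P do not cover P: there exists a point q ∈ P such that none of the closed segments [v0, q], [v3, q], [v6, q] is contained in P. -/
import Mathlib


open Set

/-- The vertices of the nonagon, in cyclic order. -/
noncomputable def v : Fin 9 → ℝ × ℝ :=
  ![(0, 0), (1, 5), (0, 8), (2, 4), (6, 11), (4, 7), (15, -1), (9, 3), (6, 4)]

/-- The nonagon, realized as the union of the seven triangles of a triangulation. -/
noncomputable def P : Set (ℝ × ℝ) :=
  convexHull ℝ {v 3, v 4, v 5} ∪ convexHull ℝ {v 3, v 5, v 8} ∪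
  convexHull ℝ {v 5, v 6, v 7} ∪ convexHull ℝ {v 5, v 7, v 8} ∪
  convexHull ℝ {v 3, v 8, v 0} ∪ convexHull ℝ {v 3, v 0, v 1} ∪
  convexHull ℝ {v 3, v 1, v 2}

lemma hv0 : v 0 = (0, 0) := rfl
lemma hv1 : v 1 = (1, 5) := rfl
lemma hv2 : v 2 = (0, 8) := rfl
lemma hv3 : v 3 = (2, 4) := rfl
lemma hv4 : v 4 = (6, 11) := rfl
lemma hv5 : v 5 = (4, 7) := rfl
lemma hv6 : v 6 = (15, -1) := rfl
lemma hv7 : v 7 = (9, 3) := rfl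
lemma hv8 : v 8 = (6, 4) := rfl

lemma halfspace_convex (a b c : ℝ) : Convex ℝ {x : ℝ × ℝ | a * x.1 + b * x.2 ≤ c} := by
  have hlin : IsLinearMap ℝ (fun x : ℝ × ℝ => a * x.1 + b * x.2) := by
    constructor
    · intro x y; simp [Prod.fst_add, Prod.snd_add]; ring
    · intro t x; simp [Prod.smul_fst, Prod.smul_snd, smul_eq_mul]; ring
  exact convex_halfSpace_le hlin c

lemma not_mem_tri {A B C p : ℝ × ℝ} (a b c : ℝ)
    (hA : a * A.1 + b * A.2 ≤ c) (hB : a * B.1 + b * B.2 ≤ c)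
    (hC : a * C.1 + b * C.2 ≤ c) (hp : c < a * p.1 + b * p.2) :
    p ∉ convexHull ℝ ({A, B, C} : Set (ℝ × ℝ)) := by
  intro h
  have hsub : convexHull ℝ ({A, B, C} : Set (ℝ × ℝ)) ⊆ {x : ℝ × ℝ | a * x.1 + b * x.2 ≤ c} :=
    convexHull_min (by rintro x (rfl | rfl | rfl) <;> assumption) (halfspace_convex a b c)
  exact absurd (hsub h) (not_le.2 hp)

/-- Guards placed at the vertices `v 0`, `v 3`, `v 6` do not cover the nonagon `P`:
some point `q ∈ P` is visible from none of them. -/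
theorem nonagon_not_covered_by_v0_v3_v6 :
    ∃ q ∈ P, ¬ segment ℝ (v 0) q ⊆ P ∧ ¬ segment ℝ (v 3) q ⊆ P ∧
      ¬ segment ℝ (v 6) q ⊆ P := by
  refine ⟨((36 : ℝ)/5, (37 : ℝ)/10), ?_, ?_, ?_, ?_⟩
  · -- q ∈ P : q is in the triangle {v 5, v 7, v 8}
    have h78 : ((492 : ℝ)/67, (238 : ℝ)/67) ∈ segment ℝ (v 7) (v 8) := by
      refine ⟨30/67, 37/67, by norm_num, by norm_num, by norm_num, ?_⟩
      rw [hv7, hv8]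
      norm_num [Prod.ext_iff, Prod.smul_mk, Prod.fst_add, Prod.snd_add, smul_eq_mul]
    have hm : ((492 : ℝ)/67, (238 : ℝ)/67) ∈ convexHull ℝ ({v 5, v 7, v 8} : Set (ℝ × ℝ)) :=
      segment_subset_convexHull (by simp) (by simp) h78
    have h5 : v 5 ∈ convexHull ℝ ({v 5, v 7, v 8} : Set (ℝ × ℝ)) :=
      subset_convexHull ℝ _ (by simp)
    have hseg : ((36 : ℝ)/5, (37 : ℝ)/10) ∈ segment ℝ (v 5) ((492 : ℝ)/67, (238 : ℝ)/67) := by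
      refine ⟨3/70, 67/70, by norm_num, by norm_num, by norm_num, ?_⟩
      rw [hv5]
      norm_num [Prod.ext_iff, Prod.smul_mk, Prod.fst_add, Prod.snd_add, smul_eq_mul]
    have hq : ((36 : ℝ)/5, (37 : ℝ)/10) ∈ convexHull ℝ ({v 5, v 7, v 8} : Set (ℝ × ℝ)) :=
      (convex_convexHull ℝ _).segment_subset h5 hm hseg
    simp only [P, mem_union]
    tauto
  · -- not visible from v 0 : witness point (18/5, 37/20)
    intro hsub
    have hmem : ((18 : ℝ)/5, (37 : ℝ)/20) ∈ segment ℝ (v 0) ((36 : ℝ)/5, (37 : ℝ)/10) := by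
      refine ⟨1/2, 1/2, by norm_num, by norm_num, by norm_num, ?_⟩
      rw [hv0]
      norm_num [Prod.ext_iff, Prod.smul_mk, Prod.fst_add, Prod.snd_add, smul_eq_mul]
    have := hsub hmem
    simp only [P, mem_union, not_or] at this
    rcases this with ((((((h|h)|h)|h)|h)|h)|h)
    · exact not_mem_tri 4 (-2) 2 (by rw [hv3]; norm_num) (by rw [hv4]; norm_num)
        (by rw [hv5]; norm_num) (by norm_num) h
    · exact not_mem_tri 0 (-4) (-16) (by rw [hv3]; norm_num) (by rw [hv5]; norm_num)
        (by rw [hv8]; norm_num) (by norm_num) h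
    · exact not_mem_tri (-4) (-6) (-54) (by rw [hv5]; norm_num) (by rw [hv6]; norm_num)
        (by rw [hv7]; norm_num) (by norm_num) h
    · exact not_mem_tri (-1) (-3) (-18) (by rw [hv5]; norm_num) (by rw [hv7]; norm_num)
        (by rw [hv8]; norm_num) (by norm_num) h
    · exact not_mem_tri 4 (-6) 0 (by rw [hv3]; norm_num) (by rw [hv8]; norm_num)
        (by rw [hv0]; norm_num) (by norm_num) h
    · exact not_mem_tri 4 (-2) 0 (by rw [hv3]; norm_num) (by rw [hv0]; norm_num)
        (by rw [hv1]; norm_num) (by norm_num) h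
    · exact not_mem_tri (-1) (-1) (-6) (by rw [hv3]; norm_num) (by rw [hv1]; norm_num)
        (by rw [hv2]; norm_num) (by norm_num) h
  · -- not visible from v 3 : witness point (59/10, 151/40)
    intro hsub
    have hmem : ((59 : ℝ)/10, (151 : ℝ)/40) ∈ segment ℝ (v 3) ((36 : ℝ)/5, (37 : ℝ)/10) := by
      refine ⟨1/4, 3/4, by norm_num, by norm_num, by norm_num, ?_⟩
      rw [hv3]
      norm_num [Prod.ext_iff, Prod.smul_mk, Prod.fst_add, Prod.snd_add, smul_eq_mul]
    have := hsub hmem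
    simp only [P, mem_union, not_or] at this
    rcases this with ((((((h|h)|h)|h)|h)|h)|h)
    · exact not_mem_tri 4 (-2) 2 (by rw [hv3]; norm_num) (by rw [hv4]; norm_num)
        (by rw [hv5]; norm_num) (by norm_num) h
    · exact not_mem_tri 0 (-4) (-16) (by rw [hv3]; norm_num) (by rw [hv5]; norm_num)
        (by rw [hv8]; norm_num) (by norm_num) h
    · exact not_mem_tri (-4) (-6) (-54) (by rw [hv5]; norm_num) (by rw [hv6]; norm_num)
        (by rw [hv7]; norm_num) (by norm_num) h
    · exact not_mem_tri (-1) (-3) (-18) (by rw [hv5]; norm_num) (by rw [hv7]; norm_num)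
        (by rw [hv8]; norm_num) (by norm_num) h
    · exact not_mem_tri 4 (-6) 0 (by rw [hv3]; norm_num) (by rw [hv8]; norm_num)
        (by rw [hv0]; norm_num) (by norm_num) h
    · exact not_mem_tri 4 (-2) 0 (by rw [hv3]; norm_num) (by rw [hv0]; norm_num)
        (by rw [hv1]; norm_num) (by norm_num) h
    · exact not_mem_tri 4 2 16 (by rw [hv3]; norm_num) (by rw [hv1]; norm_num)
        (by rw [hv2]; norm_num) (by norm_num) h
  · -- not visible from v 6 : witness point (111/10, 27/20)
    intro hsub
    have hmem : ((111 : ℝ)/10, (27 : ℝ)/20) ∈ segment ℝ (v 6) ((36 : ℝ)/5, (37 : ℝ)/10) := by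
      refine ⟨1/2, 1/2, by norm_num, by norm_num, by norm_num, ?_⟩
      rw [hv6]
      norm_num [Prod.ext_iff, Prod.smul_mk, Prod.fst_add, Prod.snd_add, smul_eq_mul]
    have := hsub hmem
    simp only [P, mem_union, not_or] at this
    rcases this with ((((((h|h)|h)|h)|h)|h)|h)
    · exact not_mem_tri 4 (-2) 2 (by rw [hv3]; norm_num) (by rw [hv4]; norm_num)
        (by rw [hv5]; norm_num) (by norm_num) h
    · exact not_mem_tri 3 2 26 (by rw [hv3]; norm_num) (by rw [hv5]; norm_num)
        (by rw [hv8]; norm_num) (by norm_num) h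
    · exact not_mem_tri (-4) (-6) (-54) (by rw [hv5]; norm_num) (by rw [hv6]; norm_num)
        (by rw [hv7]; norm_num) (by norm_num) h
    · exact not_mem_tri 4 5 51 (by rw [hv5]; norm_num) (by rw [hv7]; norm_num)
        (by rw [hv8]; norm_num) (by norm_num) h
    · exact not_mem_tri 4 (-6) 0 (by rw [hv3]; norm_num) (by rw [hv8]; norm_num)
        (by rw [hv0]; norm_num) (by norm_num) h
    · exact not_mem_tri 4 (-2) 0 (by rw [hv3]; norm_num) (by rw [hv0]; norm_num)
        (by rw [hv1]; norm_num) (by norm_num) h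
    · exact not_mem_tri 4 2 16 (by rw [hv3]; norm_num) (by rw [hv1]; norm_num)
        (by rw [hv2]; norm_num) (by norm_num) h
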